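/- arXiv:2509.05870 — 3 statements merged into one kernel-verified Lean document; each statement's English description precedes it below -/
import Mathlib

section
/- Fix parameters 1 ≥ p_1 ≥ p_2 ≥ ··· ≥ p_r > 0. If Z_{p_{i+1}, p_i} for i = 1, ..., r-1 are independent zero-inflated geometric random variables, then their sum has the same distribution as a single zero-inflated geometric Z_{p_r, p_1}. -/
open MeasureTheory ProbabilityTheory

/-- PMF of the zero-inflated geometric random variable `Z_{q,p}`. -/
noncomputable def zigPMF (q p : ℝ) (k : ℕ) : ℝ :=
  if k = 0 then q / p else (1 - q / p) * (1 - q) ^ (k - 1) * q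

open Finset

/-!
Write `Z_{q,p}` for the zero-inflated geometric law. The whole theorem rests on the
convolution identity `Z_{b,a} * Z_{c,b} = Z_{c,a}`: at `0` it reads `(b/a)(c/b) = c/a`,
and at `M + 1` the middle terms form the geometric sum `G = ∑_{j<M} (1-b)^j (1-c)^(M-1-j)`,
which satisfies `(c - b) G = (1-b)^M - (1-c)^M`. Since the law of a sum of independent `ℕ`-valued variables is the convolution of their laws, an induction on
the number of summands telescopes `Z_{p_2,p_1} * ⋯ * Z_{p_r,p_{r-1}}` to `Z_{p_r,p_1}`.
-/

section ZigPMF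

variable {a b c q p : ℝ}

lemma zigPMF_nonneg (hq : 0 ≤ q) (hqp : q ≤ p) (hq1 : q ≤ 1) (k : ℕ) : 0 ≤ zigPMF q p k := by
  have hqp' : q / p ≤ 1 := div_le_one_of_le₀ hqp (hq.trans hqp)
  unfold zigPMF
  split_ifs
  · exact div_nonneg hq (hq.trans hqp)
  · exact mul_nonneg (mul_nonneg (by linarith) (pow_nonneg (by linarith) _)) hq

lemma zigPMF_self (hp : p ≠ 0) (k : ℕ) : zigPMF p p k = if k = 0 then 1 else 0 := by
  simp [zigPMF, div_self hp]

lemma zigPMF_antidiagonal_succ (ha : a ≠ 0) (hb : b ≠ 0) (M : ℕ) :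
    ∑ x ∈ antidiagonal (M + 1), zigPMF b a x.1 * zigPMF c b x.2 = zigPMF c a (M + 1) := by
  rw [Nat.sum_antidiagonal_eq_sum_range_succ_mk, sum_range_succ, sum_range_succ']
  have hmiddle : ∀ j ∈ range M, zigPMF b a (j + 1) * zigPMF c b (M + 1 - (j + 1))
      = (1 - b / a) * (1 - c / b) * b * c * ((1 - b) ^ j * (1 - c) ^ (M - 1 - j)) := by
    intro j hj
    have hjM : j < M := mem_range.1 hj
    rw [show M + 1 - (j + 1) = M - j by omega]
    simp only [zigPMF, if_neg (Nat.succ_ne_zero j), if_neg (Nat.sub_ne_zero_of_lt hjM),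
      Nat.add_sub_cancel, show M - j - 1 = M - 1 - j by omega]
    ring
  have hgeom : (∑ j ∈ range M, (1 - b) ^ j * (1 - c) ^ (M - 1 - j)) * ((1 - b) - (1 - c))
      = (1 - b) ^ M - (1 - c) ^ M := geom_sum₂_mul _ _ M
  rw [sum_congr rfl hmiddle, ← mul_sum]
  simp only [zigPMF, Nat.add_sub_cancel, Nat.sub_self, Nat.sub_zero, if_true,
    if_neg (Nat.succ_ne_zero M)]
  field_simp
  linear_combination c * (b - a) * hgeom

lemma zigPMF_antidiagonal (ha : a ≠ 0) (hb : b ≠ 0) (m : ℕ) :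
    ∑ x ∈ antidiagonal m, zigPMF b a x.1 * zigPMF c b x.2 = zigPMF c a m := by
  cases m with
  | zero =>
    simp only [Nat.antidiagonal_zero, sum_singleton, zigPMF, if_true]
    field_simp
  | succ M => exact zigPMF_antidiagonal_succ ha hb M

end ZigPMF

section Law

variable {Ω : Type*} [MeasurableSpace Ω] {μ : Measure Ω}

lemma ProbabilityTheory.IndepFun.measure_add_eq_sum_antidiagonal {X Y : Ω → ℕ} (hX : Measurable X)
    (hY : Measurable Y) (hXY : IndepFun X Y μ) (m : ℕ) :
    μ {ω | X ω + Y ω = m}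
      = ∑ x ∈ antidiagonal m, μ {ω | X ω = x.1} * μ {ω | Y ω = x.2} := by
  have hunion : {ω | X ω + Y ω = m}
      = ⋃ x ∈ antidiagonal m, {ω | X ω = x.1} ∩ {ω | Y ω = x.2} := by
    ext ω
    simp
  rw [hunion, measure_biUnion_finset]
  · refine sum_congr rfl fun x _ => ?_
    exact hXY.measure_inter_preimage_eq_mul _ _ (measurableSet_singleton x.1)
      (measurableSet_singleton x.2)
  · intro x _ y _ hxy
    refine Set.disjoint_left.2 fun ω hx hy => hxy ?_
    exact Prod.ext (hx.1.symm.trans hy.1) (hx.2.symm.trans hy.2)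
  · exact fun x _ => (hX (measurableSet_singleton x.1)).inter (hY (measurableSet_singleton x.2))

def HasZigLaw (μ : Measure Ω) (X : Ω → ℕ) (q p : ℝ) : Prop :=
  ∀ m, μ {ω | X ω = m} = ENNReal.ofReal (zigPMF q p m)

lemma hasZigLaw_zero [IsProbabilityMeasure μ] {p : ℝ} (hp : p ≠ 0) :
    HasZigLaw μ (fun _ => 0) p p := by
  intro m
  rcases m with _ | m <;> simp [zigPMF_self hp]

lemma HasZigLaw.add {X Y : Ω → ℕ} {a b c : ℝ} (hX : HasZigLaw μ X b a) (hY : HasZigLaw μ Y c b)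
    (hXm : Measurable X) (hYm : Measurable Y) (hXY : IndepFun X Y μ)
    (hc : 0 < c) (hcb : c ≤ b) (hba : b ≤ a) (hb1 : b ≤ 1) :
    HasZigLaw μ (fun ω => X ω + Y ω) c a := by
  have hfX := zigPMF_nonneg (p := a) (hc.le.trans hcb) hba hb1
  have hfY := zigPMF_nonneg (p := b) hc.le hcb (hcb.trans hb1)
  intro m
  calc μ {ω | X ω + Y ω = m}
      = ∑ x ∈ antidiagonal m, μ {ω | X ω = x.1} * μ {ω | Y ω = x.2} :=
        hXY.measure_add_eq_sum_antidiagonal hXm hYm m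
    _ = ENNReal.ofReal (∑ x ∈ antidiagonal m, zigPMF b a x.1 * zigPMF c b x.2) := by
        rw [ENNReal.ofReal_sum_of_nonneg fun x _ => mul_nonneg (hfX x.1) (hfY x.2)]
        exact sum_congr rfl fun x _ => by rw [hX, hY, ENNReal.ofReal_mul (hfX x.1)]
    _ = ENNReal.ofReal (zigPMF c a m) := by
        rw [zigPMF_antidiagonal (hc.trans_le (hcb.trans hba)).ne' (hc.trans_le hcb).ne']

lemma hasZigLaw_sum_Icc [IsProbabilityMeasure μ] {Z : ℕ → Ω → ℕ}
    (hmeas : ∀ i, Measurable (Z i)) (hindep : iIndepFun Z μ) {p : ℕ → ℝ} {n : ℕ}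
    (hp1 : p 1 ≤ 1) (hanti : AntitoneOn p (Set.Icc 1 (n + 1))) (hpos : 0 < p (n + 1))
    (hlaw : ∀ i ∈ Icc 1 n, HasZigLaw μ (Z i) (p (i + 1)) (p i)) :
    HasZigLaw μ (fun ω => ∑ i ∈ Icc 1 n, Z i ω) (p (n + 1)) (p 1) := by
  induction n with
  | zero => simpa using hasZigLaw_zero (μ := μ) hpos.ne'
  | succ n ih =>
    have hanti' : AntitoneOn p (Set.Icc 1 (n + 1)) :=
      hanti.mono (Set.Icc_subset_Icc_right (by omega))
    have hstep : p (n + 2) ≤ p (n + 1) := hanti ⟨by omega, by omega⟩ ⟨by omega, le_rfl⟩ (by omega)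
    have hle : p (n + 1) ≤ p 1 := hanti' ⟨le_rfl, by omega⟩ ⟨by omega, le_rfl⟩ (by omega)
    have hsum := ih hanti' (hpos.trans_le hstep)
      fun i hi => hlaw i (Icc_subset_Icc_right (by omega) hi)
    have hindep' : IndepFun (fun ω => ∑ i ∈ Icc 1 n, Z i ω) (Z (n + 1)) μ := by
      simpa only [← Finset.sum_fn] using hindep.indepFun_finsetSum_of_notMem hmeas (by simp)
    simp_rw [sum_Icc_succ_top (by omega : 1 ≤ n + 1)]
    exact hsum.add (hlaw (n + 1) (by simp)) (Finset.measurable_sum _ fun i _ => hmeas i)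
      (hmeas (n + 1)) hindep' hpos hstep hle (hle.trans hp1)

end Law

/-- Zero-inflated geometric telescopes: for `1 ≥ p_1 ≥ ⋯ ≥ p_r > 0`, if
`Z_i ~ Z_{p_{i+1},p_i}` (`i = 1,…,r-1`) are independent, then
`∑_{i=1}^{r-1} Z_i` has the distribution of `Z_{p_r,p_1}`. -/
theorem zig_telescope {Ω : Type*} [MeasurableSpace Ω] (μ : Measure Ω)
    [IsProbabilityMeasure μ]
    (r : ℕ) (hr : 1 ≤ r) (p : ℕ → ℝ)
    (hp1 : p 1 ≤ 1)
    (hmono : ∀ i j, 1 ≤ i → i ≤ j → j ≤ r → p j ≤ p i)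
    (hpr : 0 < p r)
    (Z : ℕ → Ω → ℕ) (hmeas : ∀ i, Measurable (Z i))
    (hindep : iIndepFun Z μ)
    (hdist : ∀ i, 1 ≤ i → i ≤ r - 1 → ∀ m : ℕ,
      μ {ω | Z i ω = m} = ENNReal.ofReal (zigPMF (p (i + 1)) (p i) m)) :
    ∀ m : ℕ, μ {ω | ∑ i ∈ Finset.Icc 1 (r - 1), Z i ω = m}
      = ENNReal.ofReal (zigPMF (p r) (p 1) m) := by
  obtain ⟨n, rfl⟩ : ∃ n, r = n + 1 := ⟨r - 1, by omega⟩
  exact hasZigLaw_sum_Icc hmeas hindep hp1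
    (fun i hi j hj hij => hmono i j hi.1 hij hj.2) hpr
    fun i hi => hdist i (mem_Icc.1 hi).1 (mem_Icc.1 hi).2
end

section
/- Let X_1,...,X_r be i.i.d. Geom(p) random variables with support {1,2,...}, and let S_i = Σ_{j=1}^i X_j. Then for all t > 0, P(max_{1 ≤ i ≤ r} |S_i - i/p| ≥ t) ≤ 2·exp(-min{t²p²/(8r), tp/4}). -/
/-!
For `c ≤ p / 2` the centred exponential moment `E[exp (c (X - 1/p))]` of a `Geom(p)` variable
lies in `[1, exp (2c²/p²)]`: the lower bound is Jensen, the upper one an elementary estimate of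
the closed form `p eᶜ / (1 - (1 - p) eᶜ)`. Hence `exp (c (S_i - i/p))` is a nonnegative
submartingale, and Doob's maximal inequality bounds the probability that `c (S_i - i/p) ≥ c t`
for some `i ≤ r` by `exp (2rc²/p² - ct)`. Taking `c = ±min (tp²/(4r)) (p/2)` and adding the two
one-sided bounds gives the claim.
-/

open MeasureTheory ProbabilityTheory

/-- PMF of the geometric distribution on `{1,2,…}`: `P(X = k) = (1-p)^{k-1} p`. -/
noncomputable def geomPMF (p : ℝ) (k : ℕ) : ℝ :=
  if k = 0 then 0 else (1 - p) ^ (k - 1) * p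

open Real Finset

namespace ProbabilityTheory

variable {Ω : Type*} [MeasurableSpace Ω] {μ : Measure Ω}

theorem iIndepFun.submartingale_exp_sum {Y : ℕ → Ω → ℝ}
    (hindep : iIndepFun Y μ) (hmeas : ∀ j, Measurable (Y j))
    (hint : ∀ j, Integrable (fun ω => exp (Y j ω)) μ)
    (hone : ∀ j, 1 ≤ ∫ ω, exp (Y j ω) ∂μ) :
    Submartingale (fun k ω => exp (∑ j ∈ Icc 1 k, Y j ω))
      (Filtration.natural Y fun j => (hmeas j).stronglyMeasurable) μ := by
  have := hindep.isProbabilityMeasure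
  set ℱ := Filtration.natural Y fun j => (hmeas j).stronglyMeasurable
  set M : ℕ → Ω → ℝ := fun k ω => exp (∑ j ∈ Icc 1 k, Y j ω)
  have hM_int : ∀ k, Integrable (M k) μ := fun k => by
    simpa [M, Finset.sum_apply] using
      hindep.integrable_exp_mul_sum (t := 1) hmeas (s := Icc 1 k) (fun j _ => by simpa using hint j)
  have hM_adapted : StronglyAdapted ℱ M := fun k =>
    (Finset.measurable_sum _ fun j hj => ((Filtration.stronglyAdapted_natural _ j).mono
      (ℱ.mono (mem_Icc.1 hj).2)).measurable).exp.stronglyMeasurable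
  refine submartingale_nat hM_adapted hM_int fun k => ?_
  have hstep : M (k + 1) = M k * fun ω => exp (Y (k + 1) ω) := by
    ext ω
    simp only [M, Pi.mul_apply, sum_Icc_succ_top (Nat.le_add_left 1 k), exp_add]
  have hindep_next : Indep (MeasurableSpace.comap (Y (k + 1)) inferInstance) (ℱ k) μ :=
    hindep.indep_comap_natural_of_lt _ k.lt_succ_self
  have hcond : μ[fun ω => exp (Y (k + 1) ω) | ℱ k] =ᵐ[μ] fun _ => ∫ ω, exp (Y (k + 1) ω) ∂μ :=
    condExp_indep_eq (hmeas _).comap_le (ℱ.le k)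
      (measurable_exp.comp (comap_measurable _)).stronglyMeasurable hindep_next
  rw [hstep]
  filter_upwards [condExp_mul_of_stronglyMeasurable_left (hM_adapted k) (hstep ▸ hM_int _) (hint _),
    hcond] with ω hpull hconst
  rw [hpull, Pi.mul_apply, hconst]
  exact le_mul_of_one_le_right (exp_pos _).le (hone _)

theorem iIndepFun.measure_exists_le_sum_le {Y : ℕ → Ω → ℝ}
    (hindep : iIndepFun Y μ) (hmeas : ∀ j, Measurable (Y j))
    (hint : ∀ j, Integrable (fun ω => exp (Y j ω)) μ)
    (hone : ∀ j, 1 ≤ ∫ ω, exp (Y j ω) ∂μ) (n : ℕ) (a : ℝ) :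
    μ {ω | ∃ i, 1 ≤ i ∧ i ≤ n ∧ a ≤ ∑ j ∈ Icc 1 i, Y j ω}
      ≤ ENNReal.ofReal (exp (-a) * ∏ j ∈ Icc 1 n, ∫ ω, exp (Y j ω) ∂μ) := by
  have := hindep.isProbabilityMeasure
  set M : ℕ → Ω → ℝ := fun k ω => exp (∑ j ∈ Icc 1 k, Y j ω)
  have hsub := hindep.submartingale_exp_sum hmeas hint hone
  have hdoob := maximal_ineq hsub (fun k ω => (exp_pos _).le) (ε := (exp a).toNNReal) n
  rw [Real.coe_toNNReal _ (exp_pos a).le] at hdoob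
  have hevent : {ω | ∃ i, 1 ≤ i ∧ i ≤ n ∧ a ≤ ∑ j ∈ Icc 1 i, Y j ω} ⊆
      {ω | exp a ≤ (range (n + 1)).sup' nonempty_range_add_one fun k => M k ω} := by
    rintro ω ⟨i, -, hin, hai⟩
    exact (exp_le_exp.2 hai).trans (le_sup' (fun k => M k ω) (mem_range_succ_iff.2 hin))
  have hmean : ∫ ω, M n ω ∂μ = ∏ j ∈ Icc 1 n, ∫ ω, exp (Y j ω) ∂μ := by
    simpa [mgf, M, Finset.sum_apply] using hindep.mgf_sum (t := 1) hmeas (Icc 1 n)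
  have hbound : ENNReal.ofReal (exp a) * μ {ω | ∃ i, 1 ≤ i ∧ i ≤ n ∧ a ≤ ∑ j ∈ Icc 1 i, Y j ω}
      ≤ ENNReal.ofReal (∏ j ∈ Icc 1 n, ∫ ω, exp (Y j ω) ∂μ) := by
    refine (mul_le_mul_right (measure_mono hevent) _).trans (hdoob.trans ?_)
    rw [← hmean]
    exact ENNReal.ofReal_le_ofReal (setIntegral_le_integral (hsub.integrable n)
      (.of_forall fun ω => (exp_pos _).le))
  calc μ {ω | ∃ i, 1 ≤ i ∧ i ≤ n ∧ a ≤ ∑ j ∈ Icc 1 i, Y j ω}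
      = ENNReal.ofReal (exp (-a)) * (ENNReal.ofReal (exp a) *
          μ {ω | ∃ i, 1 ≤ i ∧ i ≤ n ∧ a ≤ ∑ j ∈ Icc 1 i, Y j ω}) := by
        rw [← mul_assoc, ← ENNReal.ofReal_mul (exp_pos _).le, ← exp_add, neg_add_cancel,
          exp_zero, ENNReal.ofReal_one, one_mul]
    _ ≤ ENNReal.ofReal (exp (-a)) * ENNReal.ofReal (∏ j ∈ Icc 1 n, ∫ ω, exp (Y j ω) ∂μ) :=
        mul_le_mul_right hbound _
    _ = _ := (ENNReal.ofReal_mul (exp_pos _).le).symm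

end ProbabilityTheory

section NatValued

variable {Ω : Type*} [MeasurableSpace Ω] {μ : Measure Ω}

theorem lintegral_ofReal_comp_eq_of_hasSum {W : Ω → ℕ} (hW : Measurable W) {q : ℕ → ℝ}
    (hq : ∀ k, 0 ≤ q k) (hlaw : ∀ k, μ {ω | W ω = k} = ENNReal.ofReal (q k))
    {f : ℕ → ℝ} (hf : ∀ k, 0 ≤ f k) {s : ℝ} (hs : HasSum (fun k => q k * f k) s) :
    ∫⁻ ω, ENNReal.ofReal (f (W ω)) ∂μ = ENNReal.ofReal s := by
  have hmap : ∀ k, μ.map W {k} = ENNReal.ofReal (q k) := fun k => by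
    rw [Measure.map_apply hW (measurableSet_singleton k)]
    exact hlaw k
  rw [← lintegral_map (f := fun k => ENNReal.ofReal (f k)) (measurable_of_countable _) hW,
    lintegral_countable', hs.tsum_eq.symm,
    ENNReal.ofReal_tsum_of_nonneg (fun k => mul_nonneg (hq k) (hf k)) hs.summable]
  simp_rw [hmap, ← ENNReal.ofReal_mul (hf _), mul_comm]

theorem integrable_comp_of_hasSum {W : Ω → ℕ} (hW : Measurable W) {q : ℕ → ℝ}
    (hq : ∀ k, 0 ≤ q k) (hlaw : ∀ k, μ {ω | W ω = k} = ENNReal.ofReal (q k))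
    {f : ℕ → ℝ} (hf : ∀ k, 0 ≤ f k) {s : ℝ} (hs : HasSum (fun k => q k * f k) s) :
    Integrable (fun ω => f (W ω)) μ := by
  refine ⟨(measurable_of_countable f).comp hW |>.aestronglyMeasurable, ?_⟩
  rw [hasFiniteIntegral_iff_ofReal (.of_forall fun ω => hf _),
    lintegral_ofReal_comp_eq_of_hasSum hW hq hlaw hf hs]
  exact ENNReal.ofReal_lt_top

theorem integral_comp_eq_of_hasSum {W : Ω → ℕ} (hW : Measurable W) {q : ℕ → ℝ}
    (hq : ∀ k, 0 ≤ q k) (hlaw : ∀ k, μ {ω | W ω = k} = ENNReal.ofReal (q k))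
    {f : ℕ → ℝ} (hf : ∀ k, 0 ≤ f k) {s : ℝ} (hs : HasSum (fun k => q k * f k) s) :
    ∫ ω, f (W ω) ∂μ = s := by
  rw [integral_eq_lintegral_of_nonneg_ae (.of_forall fun ω => hf _)
    ((measurable_of_countable f).comp hW).aestronglyMeasurable,
    lintegral_ofReal_comp_eq_of_hasSum hW hq hlaw hf hs,
    ENNReal.toReal_ofReal (hs.nonneg fun k => mul_nonneg (hq k) (hf k))]

end NatValued

theorem one_sub_mul_exp_le_one (c : ℝ) : (1 - c) * exp c ≤ 1 := by
  calc (1 - c) * exp c ≤ exp (-c) * exp c := by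
        gcongr; linarith [add_one_le_exp (-c)]
    _ = 1 := by rw [← exp_add, neg_add_cancel, exp_zero]

noncomputable def geomMGF (p c : ℝ) : ℝ := p * exp c / (1 - (1 - p) * exp c)

section GeomMGF

variable {p c : ℝ}

theorem sub_le_one_sub_mul_one_sub_mul_exp (hp1 : p ≤ 1) :
    p - c ≤ (1 - c) * (1 - (1 - p) * exp c) := by
  nlinarith [mul_le_mul_of_nonneg_left (one_sub_mul_exp_le_one c) (sub_nonneg.2 hp1)]

theorem one_sub_mul_exp_pos (hp1 : p ≤ 1) (hc : c < p) : 0 < 1 - (1 - p) * exp c := by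
  have := sub_le_one_sub_mul_one_sub_mul_exp (c := c) hp1
  by_contra! h
  nlinarith

theorem hasSum_geomPMF_mul_exp (hp1 : p ≤ 1) (hc : c < p) :
    HasSum (fun k : ℕ => geomPMF p k * exp (c * k)) (geomMGF p c) := by
  have hratio : (1 - p) * exp c < 1 := by linarith [one_sub_mul_exp_pos hp1 hc]
  have hgeom := (hasSum_geometric_of_lt_one (by have := exp_pos c; nlinarith) hratio).mul_left
    (p * exp c)
  have hterm : ∀ n : ℕ, geomPMF p (n + 1) * exp (c * (n + 1 : ℕ)) =
      p * exp c * ((1 - p) * exp c) ^ n := fun n => by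
    rw [geomPMF, if_neg n.succ_ne_zero, Nat.add_sub_cancel, Nat.cast_succ, mul_add_one, exp_add,
      mul_comm c, exp_nat_mul, mul_pow]
    ring
  have hshift : HasSum (fun n : ℕ => geomPMF p (n + 1) * exp (c * (n + 1 : ℕ)))
      (geomMGF p c) := by
    simpa only [hterm, geomMGF, div_eq_mul_inv] using hgeom
  simpa [geomPMF] using
    (hasSum_nat_add_iff (f := fun k : ℕ => geomPMF p k * exp (c * k)) 1).mp hshift

theorem exp_div_le_geomMGF (hp0 : 0 < p) (hp1 : p ≤ 1) (hc : c < p) :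
    exp (c / p) ≤ geomMGF p c := by
  rw [geomMGF, le_div_iff₀ (one_sub_mul_exp_pos hp1 hc)]
  obtain ⟨u, rfl⟩ : ∃ u, c = p * u := ⟨c / p, (mul_div_cancel₀ c hp0.ne').symm⟩
  rw [mul_div_cancel_left₀ u hp0.ne']
  have hlin : p * u + 1 ≤ exp (p * u) := add_one_le_exp _
  have hlin' : (p * u - u + 1) * exp u ≤ exp (p * u) := by
    calc (p * u - u + 1) * exp u ≤ exp (p * u - u) * exp u := by
          gcongr; exact add_one_le_exp _
      _ = exp (p * u) := by rw [← exp_add, sub_add_cancel]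
  -- Jensen at the mean `1 / p`: tangent-line bounds at `p u` and `p u - u`, weighted `1 - p`, `p`
  nlinarith [mul_le_mul_of_nonneg_left hlin (mul_nonneg (sub_nonneg.2 hp1) (exp_pos u).le),
    mul_le_mul_of_nonneg_left hlin' hp0.le]

theorem geomMGF_le_exp (hp0 : 0 < p) (hp1 : p ≤ 1) (hc : c ≤ p / 2) :
    geomMGF p c ≤ exp (c / p + 2 * c ^ 2 / p ^ 2) := by
  have hD := one_sub_mul_exp_pos hp1 (by linarith : c < p)
  have hc1 : 0 < 1 - c := by linarith
  obtain ⟨u, rfl⟩ : ∃ u, c = p * u := ⟨c / p, (mul_div_cancel₀ c hp0.ne').symm⟩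
  have hu : u ≤ 1 / 2 := by nlinarith
  have hexponent : p * u / p + 2 * (p * u) ^ 2 / p ^ 2 = u + 2 * u ^ 2 := by field_simp
  -- `(1 + u + 2u²)(1 - u) = 1 + u²(1 - 2u) ≥ 1` for `u ≤ 1 / 2`
  have hquad : p ≤ exp (u + 2 * u ^ 2) * (p - p * u) := by
    calc p ≤ (u + 2 * u ^ 2 + 1) * (p - p * u) := by
          nlinarith [mul_nonneg (mul_nonneg hp0.le (sq_nonneg u)) (by linarith : 0 ≤ 1 - 2 * u)]
      _ ≤ exp (u + 2 * u ^ 2) * (p - p * u) := by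
          gcongr
          · nlinarith
          · exact add_one_le_exp _
  rw [geomMGF, hexponent, div_le_iff₀ hD]
  refine le_of_mul_le_mul_left ?_ hc1
  calc (1 - p * u) * (p * exp (p * u)) = p * ((1 - p * u) * exp (p * u)) := by ring
    _ ≤ p := mul_le_of_le_one_right hp0.le (one_sub_mul_exp_le_one _)
    _ ≤ exp (u + 2 * u ^ 2) * (p - p * u) := hquad
    _ ≤ exp (u + 2 * u ^ 2) * ((1 - p * u) * (1 - (1 - p) * exp (p * u))) := by
        gcongr; exact sub_le_one_sub_mul_one_sub_mul_exp hp1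
    _ = (1 - p * u) * (exp (u + 2 * u ^ 2) * (1 - (1 - p) * exp (p * u))) := by ring

end GeomMGF

section Geom

variable {Ω : Type*} [MeasurableSpace Ω] {μ : Measure Ω} {p c : ℝ}

theorem geomPMF_nonneg (hp0 : 0 ≤ p) (hp1 : p ≤ 1) (k : ℕ) : 0 ≤ geomPMF p k := by
  unfold geomPMF
  split_ifs
  · exact le_rfl
  · exact mul_nonneg (pow_nonneg (sub_nonneg.2 hp1) _) hp0

theorem geom_exp_centered_moment {W : Ω → ℕ} (hW : Measurable W)
    (hlaw : ∀ k, μ {ω | W ω = k} = ENNReal.ofReal (geomPMF p k))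
    (hp0 : 0 < p) (hp1 : p ≤ 1) (hc : c ≤ p / 2) :
    Integrable (fun ω => exp (c * (W ω - 1 / p))) μ ∧
      1 ≤ ∫ ω, exp (c * (W ω - 1 / p)) ∂μ ∧
      ∫ ω, exp (c * (W ω - 1 / p)) ∂μ ≤ exp (2 * c ^ 2 / p ^ 2) := by
  have hterm : ∀ k : ℕ, exp (-(c / p)) * (geomPMF p k * exp (c * k)) =
      geomPMF p k * exp (c * (k - 1 / p)) := fun k => by
    rw [mul_left_comm, ← exp_add]; ring_nf
  have hs : HasSum (fun k : ℕ => geomPMF p k * exp (c * (k - 1 / p)))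
      (exp (-(c / p)) * geomMGF p c) :=
    ((hasSum_geomPMF_mul_exp hp1 (by linarith)).mul_left _).congr_fun fun k => (hterm k).symm
  have hq := geomPMF_nonneg hp0.le hp1
  have hf : ∀ k : ℕ, 0 ≤ exp (c * (k - 1 / p)) := fun k => (exp_pos _).le
  refine ⟨integrable_comp_of_hasSum (f := fun k : ℕ => exp (c * (k - 1 / p))) hW hq hlaw hf hs,
    ?_, ?_⟩ <;>
    rw [integral_comp_eq_of_hasSum (f := fun k : ℕ => exp (c * (k - 1 / p))) hW hq hlaw hf hs]
  · calc (1 : ℝ) = exp (-(c / p)) * exp (c / p) := by rw [← exp_add, neg_add_cancel, exp_zero]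
      _ ≤ exp (-(c / p)) * geomMGF p c := by gcongr; exact exp_div_le_geomMGF hp0 hp1 (by linarith)
  · calc exp (-(c / p)) * geomMGF p c ≤ exp (-(c / p)) * exp (c / p + 2 * c ^ 2 / p ^ 2) := by
          gcongr; exact geomMGF_le_exp hp0 hp1 hc
      _ = exp (2 * c ^ 2 / p ^ 2) := by rw [← exp_add, neg_add_cancel_left]

theorem geom_partialSum_tail {r : ℕ} (hp0 : 0 < p) (hp1 : p ≤ 1) {X : ℕ → Ω → ℕ}
    (hmeas : ∀ i, Measurable (X i)) (hindep : iIndepFun X μ)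
    (hdist : ∀ i, 1 ≤ i → i ≤ r → ∀ k : ℕ, μ {ω | X i ω = k} = ENNReal.ofReal (geomPMF p k))
    (hc : c ≤ p / 2) (a : ℝ) :
    μ {ω | ∃ i, 1 ≤ i ∧ i ≤ r ∧ a ≤ c * ((∑ j ∈ Icc 1 i, (X j ω : ℝ)) - i / p)}
      ≤ ENNReal.ofReal (exp (2 * r * c ^ 2 / p ^ 2 - a)) := by
  have : IsProbabilityMeasure μ := hindep.isProbabilityMeasure
  -- the increments outside `[1, r]` are replaced by `0`, whose exponential moment is `1`
  let g : ℕ → ℕ → ℝ := fun j k => if 1 ≤ j ∧ j ≤ r then c * (k - 1 / p) else 0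
  let Y : ℕ → Ω → ℝ := fun j ω => g j (X j ω)
  have hY_indep : iIndepFun Y μ := hindep.comp g fun j => measurable_of_countable _
  have hY_meas : ∀ j, Measurable (Y j) := fun j => (measurable_of_countable (g j)).comp (hmeas j)
  have hY_moment : ∀ j, Integrable (fun ω => exp (Y j ω)) μ ∧
      1 ≤ ∫ ω, exp (Y j ω) ∂μ ∧ ∫ ω, exp (Y j ω) ∂μ ≤ exp (2 * c ^ 2 / p ^ 2) := fun j => by
    by_cases hj : 1 ≤ j ∧ j ≤ r
    · simpa only [Y, g, if_pos hj] using
        geom_exp_centered_moment (hmeas j) (hdist j hj.1 hj.2) hp0 hp1 hc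
    · simp only [Y, g, if_neg hj, exp_zero, integral_const, smul_eq_mul, mul_one, probReal_univ]
      exact ⟨integrable_const 1, le_rfl, one_le_exp (by positivity)⟩
  have hsum : ∀ ω i, i ≤ r →
      ∑ j ∈ Icc 1 i, Y j ω = c * ((∑ j ∈ Icc 1 i, (X j ω : ℝ)) - i / p) := fun ω i hi => by
    rw [sum_congr rfl fun j hj => if_pos ⟨(mem_Icc.1 hj).1, (mem_Icc.1 hj).2.trans hi⟩,
      ← mul_sum, sum_sub_distrib, sum_const, Nat.card_Icc, Nat.add_sub_cancel, nsmul_eq_mul,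
      mul_one_div]
  have hevent : {ω | ∃ i, 1 ≤ i ∧ i ≤ r ∧ a ≤ c * ((∑ j ∈ Icc 1 i, (X j ω : ℝ)) - i / p)} =
      {ω | ∃ i, 1 ≤ i ∧ i ≤ r ∧ a ≤ ∑ j ∈ Icc 1 i, Y j ω} := by
    ext ω
    refine exists_congr fun i => and_congr_right fun _ => and_congr_right fun hi => ?_
    rw [hsum ω i hi]
  rw [hevent]
  refine (hY_indep.measure_exists_le_sum_le hY_meas (fun j => (hY_moment j).1)
    (fun j => (hY_moment j).2.1) r a).trans (ENNReal.ofReal_le_ofReal ?_)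
  calc exp (-a) * ∏ j ∈ Icc 1 r, ∫ ω, exp (Y j ω) ∂μ
      ≤ exp (-a) * ∏ _j ∈ Icc 1 r, exp (2 * c ^ 2 / p ^ 2) := by
        gcongr with j
        exact (hY_moment j).2.2
    _ = exp (2 * r * c ^ 2 / p ^ 2 - a) := by
        rw [prod_const, Nat.card_Icc, Nat.add_sub_cancel, ← exp_nat_mul, ← exp_add]
        ring_nf

end Geom

theorem sub_gamma_chernoff_exponent_le {r p t : ℝ} (hr : 0 < r) (hp : 0 < p) (ht : 0 < t) :
    2 * r * min (t * p ^ 2 / (4 * r)) (p / 2) ^ 2 / p ^ 2 - min (t * p ^ 2 / (4 * r)) (p / 2) * t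
      ≤ -min (t ^ 2 * p ^ 2 / (8 * r)) (t * p / 4) := by
  rcases le_total (t * p ^ 2 / (4 * r)) (p / 2) with hle | hle
  · rw [min_eq_left hle]
    have := min_le_left (t ^ 2 * p ^ 2 / (8 * r)) (t * p / 4)
    have heq : 2 * r * (t * p ^ 2 / (4 * r)) ^ 2 / p ^ 2 - t * p ^ 2 / (4 * r) * t =
        -(t ^ 2 * p ^ 2 / (8 * r)) := by
      field_simp; ring
    linarith
  · rw [min_eq_right hle]
    have := min_le_right (t ^ 2 * p ^ 2 / (8 * r)) (t * p / 4)
    have h2r : 2 * r ≤ t * p := by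
      rw [div_le_div_iff₀ (by norm_num) (by positivity)] at hle
      nlinarith
    have heq : 2 * r * (p / 2) ^ 2 / p ^ 2 = r / 2 := by field_simp
    linarith

theorem geom_maximal_deviation_general {Ω : Type*} [MeasurableSpace Ω] (μ : Measure Ω)
    (r : ℕ) (hr : 1 ≤ r) (p : ℝ) (hp0 : 0 < p) (hp1 : p ≤ 1)
    (X : ℕ → Ω → ℕ) (hmeas : ∀ i, Measurable (X i))
    (hindep : iIndepFun X μ)
    (hdist : ∀ i, 1 ≤ i → i ≤ r → ∀ k : ℕ,
      μ {ω | X i ω = k} = ENNReal.ofReal (geomPMF p k))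
    (t : ℝ) (ht : 0 < t) :
    μ {ω | ∃ i, 1 ≤ i ∧ i ≤ r ∧
        t ≤ |(∑ j ∈ Finset.Icc 1 i, (X j ω : ℝ)) - i / p|}
      ≤ ENNReal.ofReal (2 * Real.exp (-(min (t ^ 2 * p ^ 2 / (8 * r)) (t * p / 4)))) := by
  set c := min (t * p ^ 2 / (4 * r)) (p / 2)
  have hc : 0 < c := lt_min (by positivity) (by positivity)
  have hcp : c ≤ p / 2 := min_le_right _ _
  have hexp : 2 * r * c ^ 2 / p ^ 2 - c * t ≤ -min (t ^ 2 * p ^ 2 / (8 * r)) (t * p / 4) :=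
    sub_gamma_chernoff_exponent_le (by exact_mod_cast hr) hp0 ht
  have hsplit : {ω | ∃ i, 1 ≤ i ∧ i ≤ r ∧ t ≤ |(∑ j ∈ Finset.Icc 1 i, (X j ω : ℝ)) - i / p|} ⊆
      {ω | ∃ i, 1 ≤ i ∧ i ≤ r ∧ c * t ≤ c * ((∑ j ∈ Icc 1 i, (X j ω : ℝ)) - i / p)} ∪
      {ω | ∃ i, 1 ≤ i ∧ i ≤ r ∧ c * t ≤ -c * ((∑ j ∈ Icc 1 i, (X j ω : ℝ)) - i / p)} := by
    rintro ω ⟨i, h1i, hir, hti⟩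
    rcases le_abs'.1 hti with h | h
    · exact Or.inr ⟨i, h1i, hir, by nlinarith⟩
    · exact Or.inl ⟨i, h1i, hir, by nlinarith⟩
  have hupper := geom_partialSum_tail hp0 hp1 hmeas hindep hdist hcp (c * t)
  have hlower := geom_partialSum_tail hp0 hp1 hmeas hindep hdist (by linarith : -c ≤ p / 2) (c * t)
  rw [neg_sq] at hlower
  calc _ ≤ _ := measure_mono hsplit
    _ ≤ _ := measure_union_le _ _
    _ ≤ ENNReal.ofReal (exp (2 * r * c ^ 2 / p ^ 2 - c * t)) +
          ENNReal.ofReal (exp (2 * r * c ^ 2 / p ^ 2 - c * t)) := add_le_add hupper hlower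
    _ = ENNReal.ofReal (2 * exp (2 * r * c ^ 2 / p ^ 2 - c * t)) := by
        rw [← ENNReal.ofReal_add (exp_pos _).le (exp_pos _).le, ← two_mul]
    _ ≤ _ := by gcongr

/-- Maximal partial-sum deviation bound for i.i.d. geometrics:
`P(max_{1≤i≤r} |S_i - i/p| ≥ t) ≤ 2 exp(-min{t²p²/(8r), tp/4})`. -/
theorem geom_maximal_deviation {Ω : Type*} [MeasurableSpace Ω] (μ : Measure Ω)
    [IsProbabilityMeasure μ]
    (r : ℕ) (hr : 1 ≤ r) (p : ℝ) (hp0 : 0 < p) (hp1 : p ≤ 1)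
    (X : ℕ → Ω → ℕ) (hmeas : ∀ i, Measurable (X i))
    (hindep : iIndepFun X μ)
    (hdist : ∀ i, 1 ≤ i → i ≤ r → ∀ k : ℕ,
      μ {ω | X i ω = k} = ENNReal.ofReal (geomPMF p k))
    (t : ℝ) (ht : 0 < t) :
    μ {ω | ∃ i, 1 ≤ i ∧ i ≤ r ∧
        t ≤ |(∑ j ∈ Finset.Icc 1 i, (X j ω : ℝ)) - i / p|}
      ≤ ENNReal.ofReal (2 * Real.exp (-(min (t ^ 2 * p ^ 2 / (8 * r)) (t * p / 4)))) :=
  geom_maximal_deviation_general μ r hr p hp0 hp1 X hmeas hindep hdist t ht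
end

section
/- Let G ~ Geom(p) supported on {1,2,...}. For 0 ≤ λ < p (and λ < -ln(1-p)), the centered cumulant generating function satisfies ln(E[e^{λG}]·e^{-λ/p}) ≤ ((1-p)/p²)·λ²/(1 - λ/p). -/
/-!
Summing the geometric series gives `E[e^{λG}] = p e^λ / D` with `D = 1 - (1-p)e^λ`, so the
centered cumulant generating function is `log (p / D) + λ - λ/p`. Bound `log (p / D) ≤ p/D - 1
= (1-p)(e^λ - 1)/D`, and `e^λ - 1 ≤ λ e^λ` turns this into `(1-p)λ/(p-λ)`; adding `λ - λ/p`
gives exactly `(1-p)λ² / (p(p-λ))`, the sub-gamma bound.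
-/

open Real

theorem Real.exp_sub_one_le_mul_exp (x : ℝ) : exp x - 1 ≤ x * exp x := by
  have h := mul_le_mul_of_nonneg_right (one_sub_le_exp_neg x) (exp_pos x).le
  rw [← exp_add, neg_add_cancel, exp_zero, sub_mul, one_mul] at h
  linarith

theorem tsum_geometric_mul_exp_succ {q : ℝ} (c lam : ℝ) (hq : 0 ≤ q) (hconv : q * exp lam < 1) :
    ∑' k : ℕ, q ^ k * c * exp (lam * (k + 1)) = c * exp lam / (1 - q * exp lam) := by
  have hterm (k : ℕ) : q ^ k * c * exp (lam * (k + 1)) = (q * exp lam) ^ k * (c * exp lam) := by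
    rw [mul_add, mul_one, exp_add, mul_comm lam, exp_nat_mul, mul_pow]
    ring
  rw [tsum_congr hterm, tsum_mul_right, tsum_geometric_of_lt_one (by positivity) hconv,
    inv_mul_eq_div]

theorem geom_mgf_ratio_sub_one_le {p lam : ℝ} (hp0 : 0 < p) (hp1 : p ≤ 1) (hlp : lam < p)
    (hconv : (1 - p) * exp lam < 1) :
    p / (1 - (1 - p) * exp lam) - 1 ≤ (1 - p) * lam / (p - lam) := by
  have hD : 0 < 1 - (1 - p) * exp lam := by linarith
  have hratio : p / (1 - (1 - p) * exp lam) - 1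
      = (1 - p) * (exp lam - 1) / (1 - (1 - p) * exp lam) := by
    field_simp
    ring
  rw [hratio, div_le_div_iff₀ hD (by linarith)]
  -- the two sides differ by exactly this product
  have key : 0 ≤ (1 - p) * p * (lam * exp lam - (exp lam - 1)) :=
    mul_nonneg (mul_nonneg (by linarith) hp0.le) (sub_nonneg.mpr (exp_sub_one_le_mul_exp lam))
  linear_combination key

theorem geom_cgf_subgamma_general (p lam : ℝ) (hp0 : 0 < p) (hp1 : p ≤ 1)
    (hlp : lam < p) (hconv : (1 - p) * Real.exp lam < 1) :
    Real.log ((∑' k : ℕ, (1 - p) ^ k * p * Real.exp (lam * (k + 1)))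
        * Real.exp (-lam / p))
      ≤ ((1 - p) / p ^ 2) * lam ^ 2 / (1 - lam / p) := by
  set D := 1 - (1 - p) * exp lam
  have hD : 0 < D := by linarith
  rw [tsum_geometric_mul_exp_succ p lam (by linarith) hconv]
  have hlog : log (p * exp lam / D * exp (-lam / p)) = log (p / D) + (lam - lam / p) := by
    rw [mul_div_right_comm, log_mul (by positivity) (by positivity),
      log_mul (by positivity) (by positivity), log_exp, log_exp]
    ring
  have hbound : (1 - p) * lam / (p - lam) + (lam - lam / p)
      = ((1 - p) / p ^ 2) * lam ^ 2 / (1 - lam / p) := by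
    have : p - lam ≠ 0 := by linarith
    field_simp
    ring
  calc log (p * exp lam / D * exp (-lam / p))
      = log (p / D) + (lam - lam / p) := hlog
    _ ≤ (p / D - 1) + (lam - lam / p) := by gcongr; exact log_le_sub_one_of_pos (by positivity)
    _ ≤ (1 - p) * lam / (p - lam) + (lam - lam / p) := by
        gcongr; exact geom_mgf_ratio_sub_one_le hp0 hp1 hlp hconv
    _ = ((1 - p) / p ^ 2) * lam ^ 2 / (1 - lam / p) := hbound

/-- Sub-gamma bound on the centered cumulant generating function of the
geometric distribution on `{1,2,…}` (here `E[e^{λG}] = ∑_{k≥0} (1-p)^k p e^{λ(k+1)}`):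
for `0 ≤ λ < p` (with `(1-p)e^λ < 1`, i.e. `λ < -ln(1-p)`),
`ln(E[e^{λG}] e^{-λ/p}) ≤ ((1-p)/p²)·λ²/(1 - λ/p)`. -/
theorem geom_cgf_subgamma (p lam : ℝ) (hp0 : 0 < p) (hp1 : p ≤ 1)
    (hl0 : 0 ≤ lam) (hlp : lam < p) (hconv : (1 - p) * Real.exp lam < 1) :
    Real.log ((∑' k : ℕ, (1 - p) ^ k * p * Real.exp (lam * (k + 1)))
        * Real.exp (-lam / p))
      ≤ ((1 - p) / p ^ 2) * lam ^ 2 / (1 - lam / p) :=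
  geom_cgf_subgamma_general p lam hp0 hp1 hlp hconv
end
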